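/- arXiv:1202.6431 — 4 statements merged into one kernel-verified Lean document; each statement's English description precedes it below -/
import Mathlib

section
/- Let A be an M-tensor, written A = cI - B with B nonnegative and c > ρ(B). Then τ(A) := min{Re λ : λ an eigenvalue of A} equals c - ρ(B); in particular τ(A) > 0 and τ(A) is itself a (real) eigenvalue of A possessing a nonnegative eigenvector. -/
open scoped BigOperators

/-- Action of an `(k+1)`-order `n`-dimensional real tensor on a complex vector:
`(A x^{m-1})_i = ∑_{i2,...,im} A_{i i2...im} x_{i2} ⋯ x_{im}` (here `k = m-1`). -/
noncomputable def tApplyC {n k : ℕ} (A : Fin n → (Fin k → Fin n) → ℝ) (x : Fin n → ℂ) (i : Fin n) : ℂ :=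
  ∑ j : Fin k → Fin n, (A i j : ℂ) * ∏ t, x (j t)

/-- Real version of the tensor action. -/
def tApplyR {n k : ℕ} (A : Fin n → (Fin k → Fin n) → ℝ) (x : Fin n → ℝ) (i : Fin n) : ℝ :=
  ∑ j : Fin k → Fin n, A i j * ∏ t, x (j t)

/-- `(lam, x)` is an eigenvalue-eigenvector pair: `x ≠ 0` and `A x^{m-1} = lam x^{[m-1]}`. -/
def IsEigPair {n k : ℕ} (A : Fin n → (Fin k → Fin n) → ℝ) (lam : ℂ) (x : Fin n → ℂ) : Prop :=
  x ≠ 0 ∧ ∀ i, tApplyC A x i = lam * x i ^ k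

/-- `lam` is an eigenvalue of `A`. -/
def IsEig {n k : ℕ} (A : Fin n → (Fin k → Fin n) → ℝ) (lam : ℂ) : Prop :=
  ∃ x, IsEigPair A lam x

/-- The set of moduli of eigenvalues of `A`. -/
def modSet {n k : ℕ} (A : Fin n → (Fin k → Fin n) → ℝ) : Set ℝ :=
  {r | ∃ lam, IsEig A lam ∧ r = ‖lam‖}

/-- The spectral radius: supremum of moduli of eigenvalues. -/
noncomputable def specRad {n k : ℕ} (A : Fin n → (Fin k → Fin n) → ℝ) : ℝ :=
  sSup (modSet A)

/-- The identity tensor: entries `δ_{i i2...im}`. -/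
noncomputable def idT (n k : ℕ) : Fin n → (Fin k → Fin n) → ℝ :=
  fun i j => if (∀ t, j t = i) then 1 else 0

/-- Entrywise nonnegative tensor. -/
def NonnegT {n k : ℕ} (A : Fin n → (Fin k → Fin n) → ℝ) : Prop := ∀ i j, 0 ≤ A i j

/-- `A` is an M-tensor: `A = c I - B` with `B ≥ 0` and `c > ρ(B)`. -/
def IsMTensor {n k : ℕ} (A : Fin n → (Fin k → Fin n) → ℝ) : Prop :=
  ∃ (B : Fin n → (Fin k → Fin n) → ℝ) (c : ℝ),
    NonnegT B ∧ specRad B < c ∧ ∀ i j, A i j = c * idT n k i j - B i j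

/-- `ρ(A)` is an eigenvalue of `A` and bounds the modulus of every eigenvalue
(the Yang–Yang theorem for nonnegative tensors). -/
def HasSpecRad {n k : ℕ} (A : Fin n → (Fin k → Fin n) → ℝ) : Prop :=
  IsEig A (specRad A) ∧ ∀ lam, IsEig A lam → ‖lam‖ ≤ specRad A

/-- Off-diagonal entries of `A` are all nonpositive (`A ∈ 𝕫`). -/
def ZTensor {n k : ℕ} (A : Fin n → (Fin k → Fin n) → ℝ) : Prop :=
  ∀ i j, (¬ ∀ t, j t = i) → A i j ≤ 0

/-- Irreducibility of a tensor. -/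
def IrreducibleT {n k : ℕ} (A : Fin n → (Fin k → Fin n) → ℝ) : Prop :=
  ¬ ∃ S : Set (Fin n), S.Nonempty ∧ S ≠ Set.univ ∧
      ∀ i ∈ S, ∀ j : Fin k → Fin n, (∀ t, j t ∉ S) → A i j = 0

/-- `C_i = ∑_{(i2,...,im) not all equal to i} |A_{i i2...im}|`. -/
noncomputable def offDiagSum {n k : ℕ} (A : Fin n → (Fin k → Fin n) → ℝ) (i : Fin n) : ℝ :=
  ∑ j ∈ Finset.univ.filter (fun j : Fin k → Fin n => ¬ ∀ t, j t = i), |A i j|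

/-
For `A = cI - B`, the pair `(λ, x)` is an eigenpair of `A` exactly when `(c - λ, x)` is one of
`B`, since the identity tensor acts by `x ↦ x^{[m-1]}`. Hence every eigenvalue `λ` of `A`
satisfies `c - Re λ ≤ |c - λ| ≤ ρ(B)`, while the Perron eigenpair `(ρ(B), x)` of `B` gives
the eigenpair `(c - ρ(B), x)` of `A` with `x ≥ 0`; so `c - ρ(B)` is the least real part.
-/

section Shift

variable {n k : ℕ}

lemma tApplyC_idT (x : Fin n → ℂ) (i : Fin n) : tApplyC (idT n k) x i = x i ^ k := by
  rw [tApplyC, Finset.sum_eq_single (fun _ => i)]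
  · simp [idT, Finset.prod_const]
  · intro j _ hj
    have hj' : ¬ ∀ t, j t = i := fun h => hj (funext h)
    simp [idT, hj']
  · simp

variable {A B : Fin n → (Fin k → Fin n) → ℝ} {c : ℝ}

lemma tApplyC_eq_smul_sub (hA : ∀ i j, A i j = c * idT n k i j - B i j)
    (x : Fin n → ℂ) (i : Fin n) :
    tApplyC A x i = c * x i ^ k - tApplyC B x i := by
  rw [← tApplyC_idT x i, tApplyC, tApplyC, tApplyC, Finset.mul_sum, ← Finset.sum_sub_distrib]
  refine Finset.sum_congr rfl fun j _ => ?_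
  rw [hA]
  push_cast
  ring

lemma isEigPair_iff_of_eq_smul_sub (hA : ∀ i j, A i j = c * idT n k i j - B i j)
    (lam : ℂ) (x : Fin n → ℂ) :
    IsEigPair A lam x ↔ IsEigPair B (c - lam) x := by
  refine and_congr_right fun _ => forall_congr' fun i => ?_
  rw [tApplyC_eq_smul_sub hA]
  constructor <;> intro h <;> linear_combination -h

lemma isEig_iff_of_eq_smul_sub (hA : ∀ i j, A i j = c * idT n k i j - B i j) (lam : ℂ) :
    IsEig A lam ↔ IsEig B (c - lam) :=
  exists_congr fun x => isEigPair_iff_of_eq_smul_sub hA lam x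

end Shift

lemma sub_le_re_of_norm_sub_le {c ρ : ℝ} {z : ℂ} (h : ‖(c : ℂ) - z‖ ≤ ρ) : c - ρ ≤ z.re := by
  have hre : ((c : ℂ) - z).re ≤ ‖(c : ℂ) - z‖ := Complex.re_le_norm _
  rw [Complex.sub_re, Complex.ofReal_re] at hre
  linarith

theorem mTensor_tau_general {n k : ℕ} (A B : Fin n → (Fin k → Fin n) → ℝ) (c : ℝ)
    (hbdd : BddAbove (modSet B)) (hc : specRad B < c)
    (hA : ∀ i j, A i j = c * idT n k i j - B i j)
    (hYY : ∃ x : Fin n → ℝ, x ≠ 0 ∧ (∀ i, 0 ≤ x i) ∧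
      IsEigPair B ((specRad B : ℝ) : ℂ) (fun i => (x i : ℂ))) :
    sInf {r : ℝ | ∃ lam : ℂ, IsEig A lam ∧ r = lam.re} = c - specRad B ∧
    0 < c - specRad B ∧
    ∃ x : Fin n → ℝ, x ≠ 0 ∧ (∀ i, 0 ≤ x i) ∧
      IsEigPair A ((c - specRad B : ℝ) : ℂ) (fun i => (x i : ℂ)) := by
  obtain ⟨x, hx0, hxnn, hxB⟩ := hYY
  have hxA : IsEigPair A ((c - specRad B : ℝ) : ℂ) (fun i => (x i : ℂ)) := by
    rw [isEigPair_iff_of_eq_smul_sub hA]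
    convert hxB using 1
    push_cast
    ring
  have hleast : IsLeast {r : ℝ | ∃ lam : ℂ, IsEig A lam ∧ r = lam.re} (c - specRad B) := by
    refine ⟨⟨_, ⟨_, hxA⟩, (Complex.ofReal_re _).symm⟩, ?_⟩
    rintro r ⟨lam, hlam, rfl⟩
    exact sub_le_re_of_norm_sub_le
      (le_csSup hbdd ⟨_, (isEig_iff_of_eq_smul_sub hA lam).mp hlam, rfl⟩)
  exact ⟨hleast.csInf_eq, sub_pos.mpr hc, x, hx0, hxnn, hxA⟩

/-- for an M-tensor `A = cI - B`, `τ(A) = c - ρ(B) > 0` and `τ(A)` is an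
eigenvalue of `A` with a nonnegative eigenvector (assuming Yang–Yang for `B`). -/
theorem mTensor_tau {n k : ℕ} (A B : Fin n → (Fin k → Fin n) → ℝ) (c : ℝ)
    (hB : NonnegT B) (hbdd : BddAbove (modSet B)) (hc : specRad B < c)
    (hA : ∀ i j, A i j = c * idT n k i j - B i j)
    (hYY : ∃ x : Fin n → ℝ, x ≠ 0 ∧ (∀ i, 0 ≤ x i) ∧
      IsEigPair B ((specRad B : ℝ) : ℂ) (fun i => (x i : ℂ))) :
    sInf {r : ℝ | ∃ lam : ℂ, IsEig A lam ∧ r = lam.re} = c - specRad B ∧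
    0 < c - specRad B ∧
    ∃ x : Fin n → ℝ, x ≠ 0 ∧ (∀ i, 0 ≤ x i) ∧
      IsEigPair A ((c - specRad B : ℝ) : ℂ) (fun i => (x i : ℂ)) :=
  mTensor_tau_general A B c hbdd hc hA hYY
end

section
/- If a tensor A with nonpositive off-diagonal entries and nonnegative diagonal entries is irreducible, diagonally dominant, and strictly diagonally dominant in at least one row, then every eigenvalue of A has positive real part (hence A is an M-tensor). -/
open scoped BigOperators

/-!
Let `x` be an eigenvector and `p` a coordinate with `‖x p‖ = ‖x‖` (sup norm). Row `p` of the
eigenvalue equation gives the Gershgorin bound `‖λ - A_{p…p}‖ ≤ C_p ≤ A_{p…p}`, so `Re λ ≥ 0`,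
with equality only for `λ = 0`. If `λ = 0`, every row indexed by a maximal coordinate attains
equality in that bound, so it puts no weight on a multi-index that touches a non-maximal
coordinate. By irreducibility all coordinates are then maximal, and equality in the strictly
dominant row is a contradiction.
-/

open Finset

lemma exists_norm_apply_eq_pi_norm {ι E : Type*} [Fintype ι] [Nonempty ι] [SeminormedAddGroup E]
    (x : ι → E) : ∃ i, ‖x i‖ = ‖x‖ := by
  obtain ⟨i, -, hi⟩ := exists_mem_eq_sup univ univ_nonempty fun i => ‖x i‖₊
  exact ⟨i, by rw [Pi.norm_def, hi]; rfl⟩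

lemma prod_le_pow_card_of_le {κ : Type*} [Fintype κ] {f : κ → ℝ} {M : ℝ}
    (h0 : ∀ t, 0 ≤ f t) (hM : ∀ t, f t ≤ M) : ∏ t, f t ≤ M ^ Fintype.card κ := by
  rw [← card_univ, ← prod_const]
  exact prod_le_prod (fun t _ => h0 t) fun t _ => hM t

lemma prod_lt_pow_card_of_le_of_lt {κ : Type*} [Fintype κ] {f : κ → ℝ} {M : ℝ}
    (h0 : ∀ t, 0 ≤ f t) (hM : ∀ t, f t ≤ M) {t₀ : κ} (ht₀ : f t₀ < M) :
    ∏ t, f t < M ^ Fintype.card κ := by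
  classical
  have hMpos : 0 < M := (h0 t₀).trans_lt ht₀
  rw [← card_univ, ← prod_const, ← mul_prod_erase univ f (mem_univ t₀),
    ← mul_prod_erase univ (fun _ => M) (mem_univ t₀), mul_comm, mul_comm M]
  exact mul_lt_mul' (prod_le_prod (fun t _ => h0 t) fun t _ => hM t) ht₀ (h0 t₀)
    (prod_pos fun _ _ => hMpos)

lemma Complex.eq_zero_or_re_pos_of_norm_sub_ofReal_le {z : ℂ} {a : ℝ} (h : ‖z - a‖ ≤ a) :
    z = 0 ∨ 0 < z.re := by
  have hre : |z.re - a| ≤ a := by simpa using (abs_re_le_norm (z - a)).trans h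
  rcases (abs_le.mp hre).1.lt_or_eq with hlt | heq
  · exact .inr (by linarith)
  · have hre0 : z.re = 0 := by linarith
    have hsq : (z.re - a) ^ 2 + z.im ^ 2 ≤ a ^ 2 := by
      have := pow_le_pow_left₀ (norm_nonneg _) h 2
      rwa [Complex.sq_norm, normSq_apply, sub_re, sub_im, ofReal_re, ofReal_im, sub_zero,
        ← sq, ← sq] at this
    have him0 : z.im = 0 := by
      rw [hre0] at hsq
      exact pow_eq_zero_iff two_ne_zero |>.mp (le_antisymm (by linarith) (sq_nonneg _))
    exact .inl (Complex.ext hre0 him0)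

section OffDiagonal

variable {n k : ℕ}

def offDiagIndices (k : ℕ) (i : Fin n) : Finset (Fin k → Fin n) :=
  univ.filter fun j => ¬ ∀ t, j t = i

lemma mem_offDiagIndices {i : Fin n} {j : Fin k → Fin n} :
    j ∈ offDiagIndices k i ↔ ¬ ∀ t, j t = i := by
  simp [offDiagIndices]

lemma offDiagSum_eq_sum_offDiagIndices (A : Fin n → (Fin k → Fin n) → ℝ) (i : Fin n) :
    offDiagSum A i = ∑ j ∈ offDiagIndices k i, |A i j| := rfl

lemma tApplyC_eq_diag_add_sum_offDiag (A : Fin n → (Fin k → Fin n) → ℝ) (x : Fin n → ℂ)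
    (i : Fin n) :
    tApplyC A x i = A i (fun _ => i) * x i ^ k +
      ∑ j ∈ offDiagIndices k i, (A i j : ℂ) * ∏ t, x (j t) := by
  have hdiag : univ.filter (fun j : Fin k → Fin n => ∀ t, j t = i) = {fun _ => i} := by
    ext j; simp [funext_iff]
  rw [tApplyC, ← sum_filter_add_sum_filter_not univ fun j => ∀ t, j t = i, hdiag,
    sum_singleton]
  simp [offDiagIndices]

lemma prod_norm_apply_le_pow (x : Fin n → ℂ) (j : Fin k → Fin n) :
    ∏ t, ‖x (j t)‖ ≤ ‖x‖ ^ k := by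
  simpa using prod_le_pow_card_of_le (fun t => norm_nonneg (x (j t))) fun t => norm_le_pi_norm x _

lemma sum_offDiag_abs_mul_prod_norm_le (A : Fin n → (Fin k → Fin n) → ℝ) (x : Fin n → ℂ)
    (i : Fin n) :
    ∑ j ∈ offDiagIndices k i, |A i j| * ∏ t, ‖x (j t)‖ ≤ offDiagSum A i * ‖x‖ ^ k := by
  rw [offDiagSum_eq_sum_offDiagIndices, sum_mul]
  exact sum_le_sum fun j _ => mul_le_mul_of_nonneg_left (prod_norm_apply_le_pow x j) (abs_nonneg _)

namespace IsEigPair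

variable {A : Fin n → (Fin k → Fin n) → ℝ} {lam : ℂ} {x : Fin n → ℂ}

lemma exists_norm_apply_eq (h : IsEigPair A lam x) : ∃ p, ‖x p‖ = ‖x‖ := by
  obtain ⟨p, -⟩ := Function.ne_iff.mp h.1
  have : Nonempty (Fin n) := ⟨p⟩
  exact exists_norm_apply_eq_pi_norm x

lemma norm_sub_diag_mul_le (h : IsEigPair A lam x) (i : Fin n) :
    ‖lam - A i (fun _ => i)‖ * ‖x i‖ ^ k ≤
      ∑ j ∈ offDiagIndices k i, |A i j| * ∏ t, ‖x (j t)‖ := by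
  have hrow : (lam - A i (fun _ => i)) * x i ^ k =
      ∑ j ∈ offDiagIndices k i, (A i j : ℂ) * ∏ t, x (j t) := by
    linear_combination (h.2 i).symm + tApplyC_eq_diag_add_sum_offDiag A x i
  rw [← norm_pow, ← norm_mul, hrow]
  refine (norm_sum_le _ _).trans_eq (sum_congr rfl fun j _ => ?_)
  rw [norm_mul, Complex.norm_real, Real.norm_eq_abs, norm_prod]

/-- For `λ = 0` and `‖x i‖ = ‖x‖` the estimate
`A_{i…i} ‖x‖^k ≤ ∑ |A_{ij}| ∏ ‖x_{j_t}‖ ≤ C_i ‖x‖^k ≤ A_{i…i} ‖x‖^k` closes up. -/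
lemma diag_eq_offDiagSum_and_sum_eq_of_zero (h : IsEigPair A 0 x) {i : Fin n}
    (hdd : offDiagSum A i ≤ A i (fun _ => i)) (hi : ‖x i‖ = ‖x‖) :
    offDiagSum A i = A i (fun _ => i) ∧
      ∑ j ∈ offDiagIndices k i, |A i j| * ∏ t, ‖x (j t)‖ = offDiagSum A i * ‖x‖ ^ k := by
  have hpos : 0 < ‖x‖ ^ k := pow_pos (norm_pos_iff.mpr h.1) k
  have hlow : A i (fun _ => i) * ‖x‖ ^ k ≤
      ∑ j ∈ offDiagIndices k i, |A i j| * ∏ t, ‖x (j t)‖ := by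
    refine le_trans ?_ (h.norm_sub_diag_mul_le i)
    rw [zero_sub, norm_neg, Complex.norm_real, Real.norm_eq_abs, hi]
    exact mul_le_mul_of_nonneg_right (le_abs_self _) hpos.le
  have hup := sum_offDiag_abs_mul_prod_norm_le A x i
  have hdd' := mul_le_mul_of_nonneg_right hdd hpos.le
  exact ⟨le_antisymm hdd (le_of_mul_le_mul_right (hlow.trans hup) hpos), by linarith⟩

end IsEigPair

lemma entry_eq_zero_of_sum_offDiag_eq {A : Fin n → (Fin k → Fin n) → ℝ} {x : Fin n → ℂ}
    {i : Fin n}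
    (hsum : ∑ j ∈ offDiagIndices k i, |A i j| * ∏ t, ‖x (j t)‖ = offDiagSum A i * ‖x‖ ^ k)
    {j : Fin k → Fin n} (hj : j ∈ offDiagIndices k i) {t₀ : Fin k} (ht₀ : ‖x (j t₀)‖ < ‖x‖) :
    A i j = 0 := by
  have hlt : ∏ t, ‖x (j t)‖ < ‖x‖ ^ k := by
    simpa using prod_lt_pow_card_of_le_of_lt (fun t => norm_nonneg (x (j t)))
      (fun t => norm_le_pi_norm x _) ht₀
  rw [offDiagSum_eq_sum_offDiagIndices, sum_mul] at hsum
  have hterm := (sum_eq_sum_iff_of_le fun j _ =>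
    mul_le_mul_of_nonneg_left (prod_norm_apply_le_pow x j) (abs_nonneg (A i j))).mp hsum j hj
  by_contra hA
  exact hlt.ne (mul_left_cancel₀ (abs_ne_zero.mpr hA) hterm)

lemma IsEig.exists_norm_sub_diag_le {A : Fin n → (Fin k → Fin n) → ℝ} {lam : ℂ}
    (h : IsEig A lam) : ∃ p, ‖lam - A p (fun _ => p)‖ ≤ offDiagSum A p := by
  obtain ⟨x, hx⟩ := h
  obtain ⟨p, hp⟩ := hx.exists_norm_apply_eq
  refine ⟨p, le_of_mul_le_mul_right ?_ (pow_pos (norm_pos_iff.mpr hx.1) k)⟩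
  calc ‖lam - A p (fun _ => p)‖ * ‖x‖ ^ k
      = ‖lam - A p (fun _ => p)‖ * ‖x p‖ ^ k := by rw [hp]
    _ ≤ ∑ j ∈ offDiagIndices k p, |A p j| * ∏ t, ‖x (j t)‖ := hx.norm_sub_diag_mul_le p
    _ ≤ offDiagSum A p * ‖x‖ ^ k := sum_offDiag_abs_mul_prod_norm_le A x p

lemma not_isEig_zero_of_irreducibleT {A : Fin n → (Fin k → Fin n) → ℝ} (hirr : IrreducibleT A)
    (hdd : ∀ i, offDiagSum A i ≤ A i (fun _ => i))
    (hstrict : ∃ i, offDiagSum A i < A i (fun _ => i)) : ¬ IsEig A 0 := by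
  rintro ⟨x, hx⟩
  have htight := fun i (hi : ‖x i‖ = ‖x‖) => hx.diag_eq_offDiagSum_and_sum_eq_of_zero (hdd i) hi
  refine hirr ⟨{i | ‖x i‖ = ‖x‖}, hx.exists_norm_apply_eq, ?_, ?_⟩
  · obtain ⟨i₀, hi₀⟩ := hstrict
    intro hS
    have hi₀S : i₀ ∈ {i | ‖x i‖ = ‖x‖} := hS ▸ Set.mem_univ i₀
    exact hi₀.ne (htight i₀ hi₀S).1
  · intro i hi j hj
    rcases isEmpty_or_nonempty (Fin k) with hk | ⟨⟨t₀⟩⟩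
    · have hempty : offDiagIndices k i = ∅ := by
        ext j'; simp [mem_offDiagIndices]
      rw [Subsingleton.elim j fun _ => i, ← (htight i hi).1, offDiagSum_eq_sum_offDiagIndices,
        hempty, sum_empty]
    · have hjt₀ : ‖x (j t₀)‖ < ‖x‖ := (norm_le_pi_norm x _).lt_of_ne (hj t₀)
      have hoff : j ∈ offDiagIndices k i := mem_offDiagIndices.mpr fun hd =>
        hj t₀ ((hd t₀).symm ▸ hi)
      exact entry_eq_zero_of_sum_offDiag_eq (htight i hi).2 hoff hjt₀

end OffDiagonal

theorem irredDiagDom_re_pos_general {n k : ℕ} (A : Fin n → (Fin k → Fin n) → ℝ)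
    (hirr : IrreducibleT A)
    (hdd : ∀ i, offDiagSum A i ≤ A i (fun _ => i))
    (hstrict : ∃ i, offDiagSum A i < A i (fun _ => i)) :
    ∀ lam : ℂ, IsEig A lam → 0 < lam.re := by
  intro lam hlam
  obtain ⟨p, hp⟩ := hlam.exists_norm_sub_diag_le
  rcases Complex.eq_zero_or_re_pos_of_norm_sub_ofReal_le (hp.trans (hdd p)) with rfl | hre
  · exact absurd hlam (not_isEig_zero_of_irreducibleT hirr hdd hstrict)
  · exact hre

/-- an irreducibly diagonally dominant tensor in `𝕫` with nonnegative diagonal has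
all eigenvalues with positive real part. -/
theorem irredDiagDom_re_pos {n k : ℕ} (A : Fin n → (Fin k → Fin n) → ℝ)
    (hZ : ZTensor A) (hdiag : ∀ i, 0 ≤ A i (fun _ => i))
    (hirr : IrreducibleT A)
    (hdd : ∀ i, offDiagSum A i ≤ A i (fun _ => i))
    (hstrict : ∃ i, offDiagSum A i < A i (fun _ => i)) :
    ∀ lam : ℂ, IsEig A lam → 0 < lam.re :=
  irredDiagDom_re_pos_general A hirr hdd hstrict
end

section
/- For any m-order n-dimensional real tensor A, every real eigenvalue λ of A satisfies L_A ≤ λ ≤ U_A, where L_A = min_i (A_{i...i} - C_i), U_A = max_i (A_{i...i} + C_i), and C_i = Σ_{(i2,...,im) not all equal to i} |A_{i i2...im}|. -/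
open scoped BigOperators

/-! At a coordinate `i` where `‖x i‖` is maximal, the eigen-equation reads
`(λ - A_{i⋯i}) x_i^k = ∑_{j not constantly i} A_{i j} x_{j_1} ⋯ x_{j_k}`, and the right-hand side
has modulus at most `C_i ‖x i‖^k`; dividing by `‖x i‖^k > 0` puts `λ` in the Gershgorin-type disc
of radius `C_i` around `A_{i⋯i}`. -/

section Gershgorin

variable {n k : ℕ} (A : Fin n → (Fin k → Fin n) → ℝ)

theorem tApplyC_eq_diag_add_offDiag (x : Fin n → ℂ) (i : Fin n) :
    tApplyC A x i = (A i (fun _ => i) : ℂ) * x i ^ k +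
      ∑ j ∈ Finset.univ.filter (fun j : Fin k → Fin n => ¬ ∀ t, j t = i),
        (A i j : ℂ) * ∏ t, x (j t) := by
  have hdiag : Finset.univ.filter (fun j : Fin k → Fin n => ∀ t, j t = i) = {fun _ => i} := by
    ext j
    simp [funext_iff]
  rw [tApplyC, ← Finset.sum_filter_add_sum_filter_not Finset.univ (fun j => ∀ t, j t = i), hdiag,
    Finset.sum_singleton, Finset.prod_const, Finset.card_univ, Fintype.card_fin]

theorem norm_offDiag_le {x : Fin n → ℂ} {M : ℝ} (hM : ∀ j, ‖x j‖ ≤ M) (i : Fin n) :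
    ‖∑ j ∈ Finset.univ.filter (fun j : Fin k → Fin n => ¬ ∀ t, j t = i),
        (A i j : ℂ) * ∏ t, x (j t)‖ ≤ offDiagSum A i * M ^ k := by
  rw [offDiagSum, Finset.sum_mul]
  refine (norm_sum_le _ _).trans (Finset.sum_le_sum fun j _ => ?_)
  rw [norm_mul, Complex.norm_real, Real.norm_eq_abs, norm_prod]
  refine mul_le_mul_of_nonneg_left ?_ (abs_nonneg _)
  calc ∏ t, ‖x (j t)‖ ≤ ∏ _t : Fin k, M :=
        Finset.prod_le_prod (fun t _ => norm_nonneg _) fun t _ => hM _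
    _ = M ^ k := by simp

variable {A}

theorem IsEigPair.norm_sub_diag_le_offDiagSum {lam : ℂ} {x : Fin n → ℂ} (h : IsEigPair A lam x)
    {i : Fin n} (hmax : ∀ j, ‖x j‖ ≤ ‖x i‖) :
    ‖lam - A i (fun _ => i)‖ ≤ offDiagSum A i := by
  obtain ⟨hx, heig⟩ := h
  have hxi : 0 < ‖x i‖ := by
    obtain ⟨j, hj⟩ := Function.ne_iff.mp hx
    exact (norm_pos_iff.mpr hj).trans_le (hmax j)
  have hsplit : (lam - A i (fun _ => i)) * x i ^ k =
      ∑ j ∈ Finset.univ.filter (fun j : Fin k → Fin n => ¬ ∀ t, j t = i),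
        (A i j : ℂ) * ∏ t, x (j t) := by
    linear_combination (heig i).symm + tApplyC_eq_diag_add_offDiag A x i
  have hbound := norm_offDiag_le A hmax i
  rw [← hsplit, norm_mul, norm_pow] at hbound
  exact le_of_mul_le_mul_right hbound (pow_pos hxi k)

theorem IsEig.exists_norm_sub_diag_le_offDiagSum {lam : ℂ} (h : IsEig A lam) :
    ∃ i, ‖lam - A i (fun _ => i)‖ ≤ offDiagSum A i := by
  obtain ⟨x, hx⟩ := h
  have : Nonempty (Fin n) := ⟨(Function.ne_iff.mp hx.1).choose⟩
  obtain ⟨i, hi⟩ := Finite.exists_max fun j => ‖x j‖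
  exact ⟨i, hx.norm_sub_diag_le_offDiagSum hi⟩

end Gershgorin

/-- every real eigenvalue `λ` of `A` satisfies `L_A ≤ λ ≤ U_A`. -/
theorem real_eig_bounds {n k : ℕ} (hn : 0 < n) (A : Fin n → (Fin k → Fin n) → ℝ) :
    ∀ lam : ℝ, IsEig A (lam : ℂ) →
      Finset.univ.inf' (Finset.univ_nonempty_iff.mpr (Fin.pos_iff_nonempty.mp hn))
          (fun i => A i (fun _ => i) - offDiagSum A i) ≤ lam ∧
      lam ≤ Finset.univ.sup' (Finset.univ_nonempty_iff.mpr (Fin.pos_iff_nonempty.mp hn))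
          (fun i => A i (fun _ => i) + offDiagSum A i) := by
  intro lam hlam
  obtain ⟨i, hi⟩ := hlam.exists_norm_sub_diag_le_offDiagSum
  rw [← Complex.ofReal_sub, Complex.norm_real, Real.norm_eq_abs] at hi
  obtain ⟨hlow, hupp⟩ := abs_le.mp hi
  constructor
  · exact (Finset.inf'_le _ (Finset.mem_univ i)).trans (by linarith)
  · exact le_trans (by linarith) (Finset.le_sup' (fun i => A i (fun _ => i) + offDiagSum A i)
      (Finset.mem_univ i))
end

section
/- If A = cI - B is an M-tensor (B nonnegative, c > ρ(B)) of even order m with A symmetric, then the associated homogeneous form f(x) = Σ_{i1,...,im} A_{i1...im} x_{i1}···x_{im} is positive definite, i.e., f(x) > 0 for all nonzero x ∈ ℝ^n. -/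
open scoped BigOperators

/-! Minimise the form `f x = A x^m` on the "sphere" `∑ xᵢ^m = 1`, which is compact because `m`
is even; say the minimum `λ` is attained at `y`. By homogeneity `f ≥ λ ∑ xᵢ^m` on all of `ℝⁿ`, so
`y` is a critical point of `f - λ ∑ xᵢ^m`, and symmetry of `A` turns this into the H-eigenvalue
equation `A y^{m-1} = λ y^{[m-1]}`. Then `c - λ` is a real eigenvalue of `B`, so
`c - λ ≤ ρ(B) < c`, i.e. `λ > 0`, and `f x ≥ λ ∑ xᵢ^m > 0` for `x ≠ 0`. -/

open Finset

variable {n k : ℕ}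

def tForm (A : Fin n → (Fin k → Fin n) → ℝ) (x : Fin n → ℝ) : ℝ :=
  ∑ g : Fin (k + 1) → Fin n, A (g 0) (Fin.tail g) * ∏ t, x (g t)

def IsSymmT (A : Fin n → (Fin k → Fin n) → ℝ) : Prop :=
  ∀ (g : Fin (k + 1) → Fin n) (σ : Equiv.Perm (Fin (k + 1))),
    A ((g ∘ σ) 0) (Fin.tail (g ∘ σ)) = A (g 0) (Fin.tail g)

def powSum (m : ℕ) (x : Fin n → ℝ) : ℝ := ∑ i, x i ^ m

lemma sum_pi_fin_succ {α M : Type*} [Fintype α] [AddCommMonoid M] (F : (Fin (k + 1) → α) → M) :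
    ∑ g, F g = ∑ a, ∑ h : Fin k → α, F (Fin.cons a h) := by
  rw [← (Fin.consEquiv fun _ => α).sum_comp, Fintype.sum_prod_type]
  rfl

lemma IsSymmT.sum_mul_comp {A : Fin n → (Fin k → Fin n) → ℝ} (hA : IsSymmT A)
    (σ : Equiv.Perm (Fin (k + 1))) (F : (Fin (k + 1) → Fin n) → ℝ) :
    ∑ g : Fin (k + 1) → Fin n, A (g 0) (Fin.tail g) * F (g ∘ σ) =
      ∑ g : Fin (k + 1) → Fin n, A (g 0) (Fin.tail g) * F g := by
  conv_lhs => enter [2, g]; rw [← hA g σ]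
  exact (σ.arrowCongr (Equiv.refl (Fin n))).symm.sum_comp fun g => A (g 0) (Fin.tail g) * F g

lemma tApplyR_idT (x : Fin n → ℝ) (i : Fin n) : tApplyR (idT n k) x i = x i ^ k := by
  rw [tApplyR, sum_eq_single (fun _ => i)]
  · simp [idT]
  · intro j _ hj
    have : ¬ ∀ t, j t = i := fun h => hj (funext h)
    simp [idT, this]
  · simp

lemma tForm_smul (A : Fin n → (Fin k → Fin n) → ℝ) (a : ℝ) (x : Fin n → ℝ) :
    tForm A (a • x) = a ^ (k + 1) * tForm A x := by
  simp only [tForm, mul_sum, Pi.smul_apply, smul_eq_mul, prod_mul_distrib, prod_const,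
    card_univ, Fintype.card_fin]
  exact sum_congr rfl fun _ _ => by ring

lemma powSum_smul (m : ℕ) (a : ℝ) (x : Fin n → ℝ) :
    powSum m (a • x) = a ^ m * powSum m x := by
  simp only [powSum, mul_sum, Pi.smul_apply, smul_eq_mul, mul_pow]

lemma powSum_pos {m : ℕ} (hm : Even m) {x : Fin n → ℝ} (hx : x ≠ 0) : 0 < powSum m x := by
  obtain ⟨i, hi⟩ := Function.ne_iff.1 hx
  exact sum_pos' (fun j _ => hm.pow_nonneg _) ⟨i, mem_univ i, hm.pow_pos hi⟩

lemma continuous_tForm (A : Fin n → (Fin k → Fin n) → ℝ) : Continuous (tForm A) := by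
  unfold tForm
  fun_prop

lemma isCompact_powSum_eq_one {m : ℕ} (hm : Even m) (hm0 : m ≠ 0) :
    IsCompact {x : Fin n → ℝ | powSum m x = 1} := by
  refine Metric.isCompact_of_isClosed_isBounded
    (isClosed_eq (by unfold powSum; fun_prop) continuous_const) ?_
  refine (Metric.isBounded_iff_subset_closedBall 0).2 ⟨1, fun x hx => ?_⟩
  rw [mem_closedBall_zero_iff, pi_norm_le_iff_of_nonneg zero_le_one]
  intro i
  have hle : x i ^ m ≤ 1 := hx ▸ single_le_sum (fun j _ => hm.pow_nonneg (x j)) (mem_univ i)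
  rw [← hm.pow_abs] at hle
  exact (pow_le_one_iff_of_nonneg (abs_nonneg _) hm0).1 hle

lemma prod_univ_erase_eq_prod_succAbove {M : Type*} [CommMonoid M] {m : ℕ}
    (f : Fin (m + 1) → M) (i : Fin (m + 1)) :
    ∏ t ∈ univ.erase i, f t = ∏ j, f (i.succAbove j) := by
  rw [Fin.univ_succAbove m i, erase_cons, prod_map]
  rfl

lemma hasDerivAt_prod_add_mul {m : ℕ} (a b : Fin (m + 1) → ℝ) :
    HasDerivAt (fun s => ∏ t, (a t + s * b t)) (∑ t, b t * ∏ j, a (t.succAbove j)) 0 := by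
  have h := HasDerivAt.fun_finsetProd (u := univ) (x := (0 : ℝ))
    fun t _ => (hasDerivAt_mul_const (b t)).const_add (a t)
  refine h.congr_deriv (sum_congr rfl fun t _ => ?_)
  simp [prod_univ_erase_eq_prod_succAbove, mul_comm]

/-- Differentiating `A (y + s eᵢ)^m` at `s = 0` gives one term per slot of `A`; symmetry
(moving that slot to the front with a cycle) makes each of them equal to `(A y^{m-1})ᵢ`. -/
lemma IsSymmT.hasDerivAt_tForm {A : Fin n → (Fin k → Fin n) → ℝ} (hA : IsSymmT A)
    (y : Fin n → ℝ) (i : Fin n) :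
    HasDerivAt (fun s : ℝ => tForm A (y + s • Pi.single i 1)) ((k + 1) * tApplyR A y i) 0 := by
  set e : Fin n → ℝ := Pi.single i 1
  have hslot : ∀ t : Fin (k + 1),
      ∑ g : Fin (k + 1) → Fin n, A (g 0) (Fin.tail g) * (e (g t) * ∏ j, y (g (t.succAbove j)))
        = tApplyR A y i := by
    intro t
    have hσ := hA.sum_mul_comp t.cycleRange.symm
      fun h => e (h 0) * ∏ j : Fin k, y (h j.succ)
    simp only [Function.comp_apply, Fin.cycleRange_symm_zero, Fin.cycleRange_symm_succ] at hσ
    rw [hσ, sum_pi_fin_succ, tApplyR, Fintype.sum_eq_single i]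
    · simp [e]
    · intro a ha
      simp [e, ha]
  have hderiv := HasDerivAt.fun_sum (u := univ) fun g _ =>
    (hasDerivAt_prod_add_mul (fun t => y (g t)) (fun t => e (g t))).const_mul
      (A (g 0) (Fin.tail g))
  have hfun : (fun s : ℝ => tForm A (y + s • e)) =
      fun s => ∑ g : Fin (k + 1) → Fin n,
        A (g 0) (Fin.tail g) * ∏ t, (y (g t) + s * e (g t)) := by
    funext s
    simp [tForm]
  rw [hfun]
  refine hderiv.congr_deriv ?_
  simp_rw [mul_sum]
  rw [sum_comm]
  simp [hslot]

lemma hasDerivAt_powSum (y : Fin n → ℝ) (i : Fin n) :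
    HasDerivAt (fun s : ℝ => powSum (k + 1) (y + s • Pi.single i 1)) ((k + 1) * y i ^ k) 0 := by
  have h := HasDerivAt.fun_sum (u := univ) (x := (0 : ℝ)) fun j _ =>
    ((hasDerivAt_mul_const ((Pi.single i 1 : Fin n → ℝ) j)).const_add (y j)).pow (k + 1)
  have hfun : (fun s : ℝ => powSum (k + 1) (y + s • Pi.single i 1)) =
      fun s => ∑ j, (y j + s * (Pi.single i 1 : Fin n → ℝ) j) ^ (k + 1) := by
    funext s
    simp [powSum]
  rw [hfun]
  refine h.congr_deriv ?_
  simp [Pi.single_apply]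

section Extremal

variable {A : Fin n → (Fin k → Fin n) → ℝ} {lam : ℝ}

lemma IsSymmT.tApplyR_eq_of_forall_le (hA : IsSymmT A)
    (hlow : ∀ x, lam * powSum (k + 1) x ≤ tForm A x) {y : Fin n → ℝ}
    (hy : tForm A y = lam * powSum (k + 1) y) (i : Fin n) :
    tApplyR A y i = lam * y i ^ k := by
  set ψ : ℝ → ℝ := fun s =>
    tForm A (y + s • Pi.single i 1) - lam * powSum (k + 1) (y + s • Pi.single i 1)
  have hmin : IsLocalMin ψ 0 := Filter.Eventually.of_forall fun s => by
    simp only [ψ, zero_smul, add_zero, hy, sub_self, sub_nonneg, hlow]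
  have hderiv := (hA.hasDerivAt_tForm y i).sub ((hasDerivAt_powSum (k := k) y i).const_mul lam)
  have h := hmin.hasDerivAt_eq_zero hderiv
  have hk : (k + 1 : ℝ) ≠ 0 := by positivity
  apply mul_left_cancel₀ hk
  linear_combination h

lemma mul_powSum_le_tForm (heven : Even (k + 1))
    (hsphere : ∀ z, powSum (k + 1) z = 1 → lam ≤ tForm A z) (x : Fin n → ℝ) :
    lam * powSum (k + 1) x ≤ tForm A x := by
  rcases eq_or_ne x 0 with rfl | hx
  · simp [tForm, powSum]
  set s := powSum (k + 1) x
  have hs : 0 < s := powSum_pos heven hx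
  set r := s ^ ((k + 1 : ℕ)⁻¹ : ℝ)
  have hr : r ^ (k + 1) = s := Real.rpow_inv_natCast_pow hs.le k.succ_ne_zero
  have hz := hsphere (r⁻¹ • x) (by rw [powSum_smul, inv_pow, hr, inv_mul_cancel₀ hs.ne'])
  rw [tForm_smul, inv_pow, hr, le_inv_mul_iff₀ hs] at hz
  linarith

end Extremal

section Spectrum

variable {A B : Fin n → (Fin k → Fin n) → ℝ}

lemma bddAbove_modSet (B : Fin n → (Fin k → Fin n) → ℝ) : BddAbove (modSet B) := by
  refine ⟨∑ i, ∑ j, |B i j|, ?_⟩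
  rintro r ⟨lam, ⟨x, hx0, hx⟩, rfl⟩
  obtain ⟨i₀, hi₀⟩ := Function.ne_iff.1 hx0
  obtain ⟨i, -, hi⟩ := exists_max_image univ (fun i => ‖x i‖) ⟨i₀, mem_univ _⟩
  have hxi : 0 < ‖x i‖ := (norm_pos_iff.2 hi₀).trans_le (hi i₀ (mem_univ _))
  have hrow : ‖lam‖ * ‖x i‖ ^ k ≤ (∑ j, |B i j|) * ‖x i‖ ^ k := by
    rw [← norm_pow, ← norm_mul, ← hx i, tApplyC, sum_mul]
    refine (norm_sum_le _ _).trans (sum_le_sum fun j _ => ?_)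
    rw [norm_mul, Complex.norm_real, Real.norm_eq_abs, norm_prod, norm_pow]
    gcongr
    exact (prod_le_prod (g := fun _ => ‖x i‖) (fun _ _ => norm_nonneg _)
      fun t _ => hi _ (mem_univ _)).trans_eq (by simp)
  calc ‖lam‖ ≤ ∑ j, |B i j| := le_of_mul_le_mul_right hrow (pow_pos hxi k)
    _ ≤ ∑ i, ∑ j, |B i j| :=
      single_le_sum (f := fun i => ∑ j, |B i j|) (fun _ _ => sum_nonneg fun _ _ => abs_nonneg _)
        (mem_univ i)

lemma IsEig.norm_le_specRad {lam : ℂ} (h : IsEig B lam) : ‖lam‖ ≤ specRad B :=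
  le_csSup (bddAbove_modSet B) ⟨lam, h, rfl⟩

lemma isEig_ofReal {lam : ℝ} {y : Fin n → ℝ} (hy : y ≠ 0)
    (h : ∀ i, tApplyR B y i = lam * y i ^ k) : IsEig B lam := by
  refine ⟨fun i => y i, fun h0 => hy (funext fun i => by simpa using congrFun h0 i), fun i => ?_⟩
  have hcast : tApplyC B (fun i => (y i : ℂ)) i = (tApplyR B y i : ℂ) := by
    simp [tApplyC, tApplyR]
  rw [hcast, h i]
  push_cast
  ring

lemma tApplyR_eq_of_eq_smul_idT_sub {c : ℝ} (hA : ∀ i j, A i j = c * idT n k i j - B i j)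
    (x : Fin n → ℝ) (i : Fin n) : tApplyR A x i = c * x i ^ k - tApplyR B x i := by
  simp only [tApplyR, hA, sub_mul, sum_sub_distrib, mul_assoc, ← mul_sum]
  rw [← tApplyR, tApplyR_idT]

end Spectrum

theorem mTensor_form_posDef_general {n k : ℕ} (A B : Fin n → (Fin k → Fin n) → ℝ) (c : ℝ)
    (hc : specRad B < c)
    (hA : ∀ i j, A i j = c * idT n k i j - B i j)
    (heven : Even (k + 1))
    (hsymm : ∀ (g : Fin (k + 1) → Fin n) (σ : Equiv.Perm (Fin (k + 1))),
      A ((g ∘ σ) 0) (fun t => (g ∘ σ) t.succ) = A (g 0) (fun t => g t.succ)) :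
    ∀ x : Fin n → ℝ, x ≠ 0 →
      0 < ∑ g : Fin (k + 1) → Fin n, A (g 0) (fun t => g t.succ) * ∏ t, x (g t) := by
  intro x hx
  obtain ⟨i, -⟩ := Function.ne_iff.1 hx
  have hunit : powSum (k + 1) (Pi.single i 1 : Fin n → ℝ) = 1 := by
    simp [powSum, Pi.single_apply]
  obtain ⟨y, hy1, hymin⟩ := (isCompact_powSum_eq_one heven k.succ_ne_zero).exists_isMinOn
    ⟨_, hunit⟩ (continuous_tForm A).continuousOn
  set lam := tForm A y
  have hlow : ∀ z, lam * powSum (k + 1) z ≤ tForm A z :=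
    mul_powSum_le_tForm heven fun z hz => hymin hz
  have hy0 : y ≠ 0 := by
    rintro rfl
    simp [powSum] at hy1
  have hAeig : ∀ j, tApplyR A y j = lam * y j ^ k :=
    IsSymmT.tApplyR_eq_of_forall_le hsymm hlow
      (by rw [show powSum (k + 1) y = 1 from hy1, mul_one])
  have hBeig : IsEig B (c - lam : ℝ) := isEig_ofReal hy0 fun j => by
    linarith [tApplyR_eq_of_eq_smul_idT_sub hA y j, hAeig j]
  have hlam : 0 < lam := by
    have h := hBeig.norm_le_specRad
    rw [Complex.norm_real, Real.norm_eq_abs] at h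
    linarith [le_abs_self (c - lam)]
  exact (mul_pos hlam (powSum_pos heven hx)).trans_le (hlow x)

/-- an even-order symmetric M-tensor `A = cI - B` has a positive definite
associated homogeneous form. -/
theorem mTensor_form_posDef {n k : ℕ} (A B : Fin n → (Fin k → Fin n) → ℝ) (c : ℝ)
    (hB : NonnegT B) (hc : specRad B < c)
    (hA : ∀ i j, A i j = c * idT n k i j - B i j)
    (heven : Even (k + 1))
    (hsymm : ∀ (g : Fin (k + 1) → Fin n) (σ : Equiv.Perm (Fin (k + 1))),
      A ((g ∘ σ) 0) (fun t => (g ∘ σ) t.succ) = A (g 0) (fun t => g t.succ)) :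
    ∀ x : Fin n → ℝ, x ≠ 0 →
      0 < ∑ g : Fin (k + 1) → Fin n, A (g 0) (fun t => g t.succ) * ∏ t, x (g t) :=
  mTensor_form_posDef_general A B c hc hA heven hsymm
end
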